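/- For every n ≥ 3, the number of permutations π ∈ S_n such that π avoids both 213 and 312, π² avoids the consecutive pattern 213, and π(n) = 1, equals 2^{n−3} + 1. -/

import Mathlib

/-- `π` contains the (classical) pattern `σ`: there is a strictly increasing
sequence of positions on which `π` is order isomorphic to `σ`. -/
def ContainsPat {n k : ℕ} (π : Equiv.Perm (Fin n)) (σ : Equiv.Perm (Fin k)) : Prop :=
  ∃ f : Fin k → Fin n, StrictMono f ∧ ∀ a b : Fin k, σ a < σ b ↔ π (f a) < π (f b)

/-- `π` avoids the pattern `σ`. -/
def AvoidsPat {n k : ℕ} (π : Equiv.Perm (Fin n)) (σ : Equiv.Perm (Fin k)) : Prop :=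
  ¬ ContainsPat π σ

/-- `π` contains the consecutive pattern `σ`: some `k` consecutive positions of `π`
carry values order isomorphic to `σ`. -/
def ContainsConsecPat {n k : ℕ} (π : Equiv.Perm (Fin n)) (σ : Equiv.Perm (Fin k)) : Prop :=
  ∃ (i : ℕ) (h : i + k ≤ n), ∀ a b : Fin k,
    σ a < σ b ↔ π ⟨i + a.val, by have := a.isLt; omega⟩ < π ⟨i + b.val, by have := b.isLt; omega⟩

/-- `π` avoids the consecutive pattern `σ`. -/
def AvoidsConsecPat {n k : ℕ} (π : Equiv.Perm (Fin n)) (σ : Equiv.Perm (Fin k)) : Prop :=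
  ¬ ContainsConsecPat π σ

/-- the pattern 231 (0-indexed: 0 ↦ 1, 1 ↦ 2, 2 ↦ 0) -/
def p231 : Equiv.Perm (Fin 3) := c[0, 1, 2]

/-- the pattern 312 (0-indexed: 0 ↦ 2, 1 ↦ 0, 2 ↦ 1) -/
def p312 : Equiv.Perm (Fin 3) := c[0, 2, 1]

/-- the pattern 213 (0-indexed: 0 ↦ 1, 1 ↦ 0, 2 ↦ 2) -/
def p213 : Equiv.Perm (Fin 3) := c[0, 1]

/-- the pattern 1432 (0-indexed: 0 ↦ 0, 1 ↦ 3, 2 ↦ 2, 3 ↦ 1) -/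
def p1432 : Equiv.Perm (Fin 4) := c[1, 3]

/-- direct sum of two permutations -/
def dsum {k m : ℕ} (σ : Equiv.Perm (Fin k)) (τ : Equiv.Perm (Fin m)) :
    Equiv.Perm (Fin (k + m)) :=
  finSumFinEquiv.symm.trans ((Equiv.sumCongr σ τ).trans finSumFinEquiv)

/-- the Lucas numbers: L₁ = 1, L₂ = 3, L_m = L_{m-1} + L_{m-2} -/
def lucas : ℕ → ℕ
  | 0 => 2
  | 1 => 1
  | n + 2 => lucas (n + 1) + lucas n


/-!
Both 213 and 312 ask for an entry smaller than an entry on each side of it, so `π` avoids both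
exactly when it has no such valley, i.e. when it increases up to its maximum and decreases
afterwards. Such a `π` is determined by the set `L` of values left of its maximum: it lists `L`
increasingly, then the other values decreasingly, and every `L` not containing the maximum
occurs. `π(n) = 1` says `1 ∉ L`. A 213 in `π²` at three consecutive positions on one side of
the peak `m` would make the middle one a valley of `π`, so it can only sit at `m - 1, m, m + 1`,
where `π²(m) = π(n) = 1`; this happens exactly when `n - 1` stands just before the peak while
the peak is not at position `n - 1`. Hence `L` ranges over the subsets of `{2, …, n - 2}` and the
set `{2, …, n - 1}`.
-/

open Finset

section

variable {n : ℕ}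

lemma lt_iff_lt_swap {α β : Type*} [LinearOrder α] [LinearOrder β] {a b : α} {x y : β}
    (hab : a ≠ b) (hxy : x ≠ y) (h : a < b ↔ x < y) : b < a ↔ y < x := by
  rw [← not_iff_not, not_lt, not_lt, hab.le_iff_lt, hxy.le_iff_lt, h]

lemma containsPat_three_iff (π : Equiv.Perm (Fin n)) (σ : Equiv.Perm (Fin 3)) :
    ContainsPat π σ ↔ ∃ i j k, i < j ∧ j < k ∧ (σ 0 < σ 1 ↔ π i < π j) ∧
      (σ 0 < σ 2 ↔ π i < π k) ∧ (σ 1 < σ 2 ↔ π j < π k) := by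
  constructor
  · rintro ⟨f, hf, hfσ⟩
    exact ⟨f 0, f 1, f 2, hf (by decide), hf (by decide), hfσ 0 1, hfσ 0 2, hfσ 1 2⟩
  · rintro ⟨i, j, k, hij, hjk, h01, h02, h12⟩
    refine ⟨![i, j, k], Fin.strictMono_iff_lt_succ.2 fun a => by fin_cases a <;> simpa, ?_⟩
    intro a b
    fin_cases a <;> fin_cases b <;> simp only [Fin.zero_eta, Fin.mk_one, Fin.reduceFinMk,
      Matrix.cons_val_zero, Matrix.cons_val_one, Matrix.cons_val_two, Matrix.head_cons,
      Matrix.tail_cons, lt_self_iff_false]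
    all_goals first
      | assumption
      | exact lt_iff_lt_swap (σ.injective.ne (by decide)) (π.injective.ne (by omega)) ‹_›

lemma p213_apply : p213 0 = 1 ∧ p213 1 = 0 ∧ p213 2 = 2 := by decide

lemma containsPat_p213_iff (π : Equiv.Perm (Fin n)) :
    ContainsPat π p213 ↔ ∃ i j k, i < j ∧ j < k ∧ π j < π i ∧ π i < π k := by
  simp only [containsPat_three_iff, p213_apply, Fin.reduceLT, false_iff, true_iff, not_lt]
  refine exists₃_congr fun i j k => and_congr_right fun hij => and_congr_right fun _ => ?_
  have := π.injective.ne hij.ne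
  grind

lemma p312_apply : p312 0 = 2 ∧ p312 1 = 0 ∧ p312 2 = 1 := by decide

lemma containsPat_p312_iff (π : Equiv.Perm (Fin n)) :
    ContainsPat π p312 ↔ ∃ i j k, i < j ∧ j < k ∧ π j < π k ∧ π k < π i := by
  simp only [containsPat_three_iff, p312_apply, Fin.reduceLT, false_iff, true_iff, not_lt]
  refine exists₃_congr fun i j k => and_congr_right fun hij => and_congr_right fun hjk => ?_
  have := π.injective.ne (hij.trans hjk).ne
  grind

lemma containsConsecPat_p213_iff (ρ : Equiv.Perm (Fin n)) :
    ContainsConsecPat ρ p213 ↔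
      ∃ i j k : Fin n, j.val = i.val + 1 ∧ k.val = i.val + 2 ∧ ρ j < ρ i ∧ ρ i < ρ k := by
  constructor
  · rintro ⟨i, hi, h⟩
    exact ⟨⟨i, by omega⟩, ⟨i + 1, by omega⟩, ⟨i + 2, hi⟩, rfl, rfl, (h 1 0).1 (by decide),
      (h 0 2).1 (by decide)⟩
  · rintro ⟨i, j, k, hj, hk, h1, h2⟩
    have ei : (⟨i.val + 0, i.isLt⟩ : Fin n) = i := rfl
    have ej : (⟨i.val + 1, by omega⟩ : Fin n) = j := Fin.ext hj.symm
    have ek : (⟨i.val + 2, by omega⟩ : Fin n) = k := Fin.ext hk.symm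
    refine ⟨i, by omega, fun a b => ?_⟩
    fin_cases a <;> fin_cases b <;> simp only [Fin.zero_eta, Fin.mk_one, Fin.reduceFinMk,
      ei, ej, ek, p213_apply, Fin.reduceLT, lt_self_iff_false, true_iff, false_iff, not_lt]
    all_goals order

namespace Equiv.Perm

/-- Equivalently, `π` increases up to its maximum and decreases afterwards. -/
def IsUnimodal (π : Equiv.Perm (Fin n)) : Prop :=
  ∀ ⦃i j k⦄, i < j → j < k → π i < π j ∨ π k < π j

instance : DecidablePred (IsUnimodal (n := n)) := fun _ => by
  unfold IsUnimodal
  infer_instance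

lemma avoidsPat_p213_and_p312_iff (π : Equiv.Perm (Fin n)) :
    AvoidsPat π p213 ∧ AvoidsPat π p312 ↔ π.IsUnimodal := by
  simp only [AvoidsPat, containsPat_p213_iff, containsPat_p312_iff]
  constructor
  · rintro ⟨h213, h312⟩ i j k hij hjk
    by_contra! h
    have hji := h.1.lt_of_ne (π.injective.ne hij.ne')
    have hjk' := h.2.lt_of_ne (π.injective.ne hjk.ne)
    rcases lt_or_gt_of_ne (π.injective.ne (hij.trans hjk).ne) with hik | hki
    · exact h213 ⟨i, j, k, hij, hjk, hji, hik⟩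
    · exact h312 ⟨i, j, k, hij, hjk, hjk', hki⟩
  · intro h
    constructor <;> rintro ⟨i, j, k, hij, hjk, h1, h2⟩ <;> rcases h hij hjk with h3 | h3 <;> order

namespace IsUnimodal

variable {π : Equiv.Perm (Fin n)} {m : Fin n}

lemma apply_lt_apply_of_le_peak (hπ : π.IsUnimodal) (hm : ∀ i, π i ≤ π m) {i j : Fin n}
    (hij : i < j) (hjm : j ≤ m) : π i < π j := by
  rcases hjm.lt_or_eq with hjm | rfl
  · exact (hπ hij hjm).resolve_right (hm j).not_gt
  · exact (hm i).lt_of_ne (π.injective.ne hij.ne)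

lemma apply_lt_apply_of_peak_le (hπ : π.IsUnimodal) (hm : ∀ i, π i ≤ π m) {i j : Fin n}
    (hmi : m ≤ i) (hij : i < j) : π j < π i := by
  rcases hmi.lt_or_eq with hmi | rfl
  · exact (hπ hmi hij).resolve_left (hm i).not_gt
  · exact (hm j).lt_of_ne (π.injective.ne hij.ne')

lemma val_add_one_eq_of_lt_peak (hπ : π.IsUnimodal) (hm : ∀ i, π i ≤ π m) {p : Fin n}
    (hp : ∀ q, q ≠ m → π q ≤ π p) (hpm : p < m) : p.val + 1 = m.val := by
  by_contra h
  have hq : p.val + 1 < n := by omega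
  have hpq := hπ.apply_lt_apply_of_le_peak hm (i := p) (j := ⟨p + 1, hq⟩)
    (Fin.lt_def.2 (by simp)) (Fin.le_def.2 (by simp; omega))
  exact (hp _ (Fin.ne_of_val_ne (by simpa using h))).not_gt hpq

lemma val_eq_add_one_of_peak_lt (hπ : π.IsUnimodal) (hm : ∀ i, π i ≤ π m) {p : Fin n}
    (hp : ∀ q, q ≠ m → π q ≤ π p) (hmp : m < p) : p.val = m.val + 1 := by
  by_contra h
  have hq : m.val + 1 < n := by omega
  have hpq := hπ.apply_lt_apply_of_peak_le hm (i := ⟨m + 1, hq⟩) (j := p)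
    (Fin.le_def.2 (by simp)) (Fin.lt_def.2 (by simp; omega))
  exact (hp _ (Fin.ne_of_val_ne (by simp))).not_gt hpq

lemma val_lt_apply_of_le_peak {π : Equiv.Perm (Fin (n + 1))} {m : Fin (n + 1)}
    (hπ : π.IsUnimodal) (hm : ∀ i, π i ≤ π m) (h0 : π 0 ≠ 0) {i : Fin (n + 1)} (him : i ≤ m) :
    i.val < (π i).val := by
  induction i using Fin.induction with
  | zero => exact Fin.pos_iff_ne_zero.2 h0
  | succ i ih =>
    have hlt := hπ.apply_lt_apply_of_le_peak hm (Fin.castSucc_lt_succ (i := i)) him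
    have := ih ((Fin.castSucc_lt_succ (i := i)).le.trans him)
    rw [Fin.lt_def] at hlt
    simp only [Fin.val_succ, Fin.val_castSucc] at *
    omega

end IsUnimodal

/-- Sorting the values by this key lists `L` increasingly, then the remaining values
decreasingly. -/
def unimodalKey (L : Finset (Fin n)) (v : Fin n) : ℕ :=
  if v ∈ L then v else 2 * n - v

lemma unimodalKey_injective (L : Finset (Fin n)) : Function.Injective (unimodalKey L) := by
  intro u v h
  simp only [unimodalKey] at h
  split_ifs at h <;> omega

def ofLeftSet (L : Finset (Fin n)) : Equiv.Perm (Fin n) :=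
  Tuple.sort (unimodalKey L)

lemma strictMono_unimodalKey_comp_ofLeftSet (L : Finset (Fin n)) :
    StrictMono (unimodalKey L ∘ ofLeftSet L) :=
  (Tuple.monotone_sort _).strictMono_of_injective
    ((unimodalKey_injective L).comp (Equiv.injective _))

lemma ofLeftSet_symm_lt_iff (L : Finset (Fin n)) {u v : Fin n} :
    (ofLeftSet L).symm u < (ofLeftSet L).symm v ↔ unimodalKey L u < unimodalKey L v := by
  conv_rhs => rw [← (ofLeftSet L).apply_symm_apply u, ← (ofLeftSet L).apply_symm_apply v]
  exact (strictMono_unimodalKey_comp_ofLeftSet L).lt_iff_lt.symm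

lemma isUnimodal_ofLeftSet (L : Finset (Fin n)) : (ofLeftSet L).IsUnimodal := by
  intro i j k hij hjk
  have h1 := strictMono_unimodalKey_comp_ofLeftSet L hij
  have h2 := strictMono_unimodalKey_comp_ofLeftSet L hjk
  simp only [Function.comp_apply, unimodalKey, Fin.lt_def] at h1 h2 ⊢
  split_ifs at h1 h2 <;> omega

def leftSet (π : Equiv.Perm (Fin (n + 1))) : Finset (Fin (n + 1)) :=
  {u | π.symm u < π.symm (Fin.last n)}

lemma apply_mem_leftSet_iff (π : Equiv.Perm (Fin (n + 1))) (i : Fin (n + 1)) :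
    π i ∈ π.leftSet ↔ i < π.symm (Fin.last n) := by
  simp [leftSet]

lemma apply_le_apply_symm_last (π : Equiv.Perm (Fin (n + 1))) (i : Fin (n + 1)) :
    π i ≤ π (π.symm (Fin.last n)) := by
  simp [Fin.le_last]

lemma ofLeftSet_leftSet {π : Equiv.Perm (Fin (n + 1))} (hπ : π.IsUnimodal) :
    ofLeftSet π.leftSet = π := by
  have hm := π.apply_le_apply_symm_last
  have hmono : StrictMono (unimodalKey π.leftSet ∘ π) := by
    intro i j hij
    simp only [Function.comp_apply, unimodalKey, apply_mem_leftSet_iff]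
    have := (π i).isLt
    have := (π j).isLt
    split_ifs with hi hj hj
    · exact hπ.apply_lt_apply_of_le_peak hm hij hj.le
    · omega
    · exact absurd (hij.trans hj) hi
    · have := Fin.lt_def.1 (hπ.apply_lt_apply_of_peak_le hm (not_lt.1 hi) hij)
      omega
  exact (Tuple.eq_sort_iff.2
    ⟨hmono.monotone, fun i j hij h => absurd (hmono.injective h) hij.ne⟩).symm

lemma leftSet_ofLeftSet {L : Finset (Fin (n + 1))} (hL : Fin.last n ∉ L) :
    (ofLeftSet L).leftSet = L := by
  ext u
  simp only [leftSet, mem_filter, mem_univ, true_and, ofLeftSet_symm_lt_iff, unimodalKey,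
    if_neg hL, Fin.val_last]
  have := u.isLt
  split_ifs with hu <;> simp only [hu, iff_true, iff_false, not_lt] <;> omega

lemma card_filter_leftSet_mem (T : Finset (Finset (Fin (n + 1))))
    (hT : ∀ L ∈ T, Fin.last n ∉ L) :
    #{π : Equiv.Perm (Fin (n + 1)) | π.IsUnimodal ∧ π.leftSet ∈ T} = #T := by
  refine card_nbij' leftSet ofLeftSet (fun π hπ => ?_) (fun L hL => ?_) (fun π hπ => ?_)
    (fun L hL => ?_)
  all_goals simp only [coe_filter, Set.mem_ofPred_eq, mem_coe, mem_univ, true_and] at *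
  · exact hπ.2
  · rw [leftSet_ofLeftSet (hT L hL)]
    exact ⟨isUnimodal_ofLeftSet L, hL⟩
  · exact ofLeftSet_leftSet hπ.1
  · exact leftSet_ofLeftSet (hT L hL)

lemma apply_ne_zero_of_ne_last {π : Equiv.Perm (Fin (n + 1))} (hlast : π (Fin.last n) = 0)
    {i : Fin (n + 1)} (hi : i ≠ Fin.last n) : π i ≠ 0 :=
  fun h => hi (π.injective (h.trans hlast.symm))

lemma apply_last_eq_zero_iff {π : Equiv.Perm (Fin (n + 2))} (hπ : π.IsUnimodal) :
    π (Fin.last _) = 0 ↔ 0 ∉ π.leftSet := by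
  simp only [leftSet, mem_filter, mem_univ, true_and, not_lt]
  refine ⟨fun h => ?_, fun h => by_contra fun hne => ?_⟩
  · rw [← h, symm_apply_apply]
    exact Fin.le_last _
  · have hlt : π.symm 0 < Fin.last _ :=
      (Fin.le_last _).lt_of_ne fun he => hne (by rw [← he, apply_symm_apply])
    have := hπ.apply_lt_apply_of_peak_le π.apply_le_apply_symm_last h hlt
    simp at this

section SecondLargest

variable {π : Equiv.Perm (Fin (n + 3))}

lemma le_second_of_ne_last {v : Fin (n + 3)} (hl : v ≠ Fin.last _) :
    v ≤ ⟨n + 1, by omega⟩ := by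
  have := Fin.val_ne_of_ne hl
  have := v.isLt
  simp only [Fin.val_last] at *
  exact Fin.le_def.2 (by simp only; omega)

lemma lt_second_of_ne {v : Fin (n + 3)} (hl : v ≠ Fin.last _) (hs : v ≠ ⟨n + 1, by omega⟩) :
    v < ⟨n + 1, by omega⟩ :=
  (le_second_of_ne_last hl).lt_of_ne hs

variable {m p : Fin (n + 3)}

lemma containsConsecPat_sq_p213 (hπ : π.IsUnimodal) (hlast : π (Fin.last _) = 0)
    (hπm : π m = Fin.last _) (hπp : π p = ⟨n + 1, by omega⟩) (hpm : p < m)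
    (hm : m ≠ ⟨n + 1, by omega⟩) : ContainsConsecPat (π ^ 2) p213 := by
  have hmax : ∀ i, π i ≤ π m := fun i => hπm ▸ Fin.le_last _
  have hpm := hπ.val_add_one_eq_of_lt_peak hmax
    (fun q hq => hπp ▸ le_second_of_ne_last (hπm ▸ π.injective.ne hq)) hpm
  have hm_lt : m.val < n + 1 := Fin.lt_def.1 <| lt_second_of_ne (fun h => by
    rw [h] at hπm
    exact Fin.last_pos.ne' (hπm.symm.trans hlast)) hm
  set k : Fin (n + 3) := ⟨m + 1, by omega⟩
  have hπk : π k < ⟨n + 1, by omega⟩ := by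
    refine lt_second_of_ne (hπm ▸ π.injective.ne ?_) (hπp ▸ π.injective.ne ?_) <;>
      exact Fin.ne_of_val_ne (by simp only [k]; omega)
  refine (containsConsecPat_p213_iff _).2 ⟨p, m, k, hpm.symm, by simp only [k]; omega, ?_, ?_⟩
  · simp only [sq, mul_apply, hπm, hlast, hπp]
    exact Fin.pos_iff_ne_zero.2 (apply_ne_zero_of_ne_last hlast (Fin.ne_of_val_ne (by simp)))
  · simp only [sq, mul_apply, hπp]
    by_cases hv : m ≤ π k
    · exact hπ.apply_lt_apply_of_peak_le hmax hv hπk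
    · -- the position `π k < m` lies on the increasing side, where `j < π j`
      have hsk : π ⟨n + 1, by omega⟩ ≤ π k := by
        rcases (show k ≤ ⟨n + 1, by omega⟩ from Fin.le_def.2 (by simp [k]; omega)).lt_or_eq
          with hk | hk
        · exact (hπ.apply_lt_apply_of_peak_le hmax (Fin.le_def.2 (by simp [k])) hk).le
        · rw [hk]
      have := hπ.val_lt_apply_of_le_peak hmax
        (apply_ne_zero_of_ne_last hlast Fin.last_pos.ne) (not_le.1 hv).le
      rw [Fin.le_def] at hsk
      exact Fin.lt_def.2 (by omega)

lemma avoidsConsecPat_sq_p213 (hπ : π.IsUnimodal) (hlast : π (Fin.last _) = 0)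
    (hπm : π m = Fin.last _) (hπp : π p = ⟨n + 1, by omega⟩)
    (H : p < m → m = ⟨n + 1, by omega⟩) : AvoidsConsecPat (π ^ 2) p213 := by
  have hmax : ∀ i, π i ≤ π m := fun i => hπm ▸ Fin.le_last _
  have hsecond : ∀ q, q ≠ m → π q ≤ π p := fun q hq =>
    hπp ▸ le_second_of_ne_last (hπm ▸ π.injective.ne hq)
  rintro hc
  obtain ⟨i, j, k, hj, hk, h1, h2⟩ := (containsConsecPat_p213_iff _).1 hc
  simp only [sq, mul_apply] at h1 h2
  have hij : i < j := Fin.lt_def.2 (by omega)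
  have hjk : j < k := Fin.lt_def.2 (by omega)
  rcases lt_trichotomy j m with hjm | rfl | hmj
  · have h3 := hπ.apply_lt_apply_of_le_peak hmax hij hjm.le
    have h4 := hπ.apply_lt_apply_of_le_peak hmax hjk (Fin.le_def.2 (by omega))
    rcases hπ h3 h4 with h | h <;> order
  · have hmπi : j.val ≤ (π i).val := by
      have := hπ.val_lt_apply_of_le_peak hmax
        (apply_ne_zero_of_ne_last hlast Fin.last_pos.ne) hij.le
      omega
    have hpj : p ≠ j := fun h => by
      have := congrArg Fin.val (hπp.symm.trans (h ▸ hπm))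
      simp at this
    rcases hpj.lt_or_gt with hpj | hjp
    · have hpi : p = i :=
        Fin.ext (by have := hπ.val_add_one_eq_of_lt_peak hmax hsecond hpj; omega)
      rw [hpi] at hπp
      rw [hπp, ← H hpj, hπm] at h2
      exact (Fin.le_last _).not_gt h2
    · have hpk : p = k :=
        Fin.ext (by have := hπ.val_eq_add_one_of_peak_lt hmax hsecond hjp; omega)
      rw [← hpk, hπp] at h2
      have hπi : π i < ⟨n + 1, by omega⟩ := lt_second_of_ne (hπm ▸ π.injective.ne hij.ne)
        (hπp ▸ π.injective.ne (hpk ▸ (hij.trans hjk).ne))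
      exact (hπ.apply_lt_apply_of_peak_le hmax (Fin.le_def.2 hmπi) hπi).not_gt h2
  · have h3 := hπ.apply_lt_apply_of_peak_le hmax (Fin.le_def.2 (by omega)) hij
    have h4 := hπ.apply_lt_apply_of_peak_le hmax hmj.le hjk
    rcases hπ h4 h3 with h | h <;> order

lemma avoidsConsecPat_sq_p213_iff (hπ : π.IsUnimodal) (hlast : π (Fin.last _) = 0)
    (hπm : π m = Fin.last _) (hπp : π p = ⟨n + 1, by omega⟩) :
    AvoidsConsecPat (π ^ 2) p213 ↔ (p < m → m = ⟨n + 1, by omega⟩) :=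
  ⟨fun h hpm => by_contra fun hm => h (containsConsecPat_sq_p213 hπ hlast hπm hπp hpm hm),
    avoidsConsecPat_sq_p213 hπ hlast hπm hπp⟩

lemma leftSet_eq_iff (hlast : π (Fin.last _) = 0) :
    π.leftSet = univ \ {0, Fin.last _} ↔ π.symm (Fin.last _) = ⟨n + 1, by omega⟩ := by
  have h0 : π.symm 0 = Fin.last _ := by rw [← hlast, symm_apply_apply]
  simp only [Finset.ext_iff, leftSet, mem_filter, mem_univ, true_and, mem_sdiff, mem_insert,
    mem_singleton, not_or]
  constructor
  · intro h
    by_contra hne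
    have hm : π.symm (Fin.last _) ≠ Fin.last _ := fun h' =>
      Fin.last_pos.ne' (π.symm.injective (h'.trans h0.symm))
    have hs := (h (π ⟨n + 1, by omega⟩)).2
      ⟨apply_ne_zero_of_ne_last hlast (Fin.ne_of_val_ne (by simp)),
        fun h' => hne (by rw [← h', symm_apply_apply])⟩
    rw [symm_apply_apply] at hs
    exact (lt_second_of_ne hm hne).not_gt hs
  · intro hm u
    rw [hm]
    constructor
    · intro hu
      refine ⟨fun hu0 => ?_, fun hul => ?_⟩
      · rw [hu0, h0, Fin.lt_def] at hu
        simp at hu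
      · rw [hul, hm] at hu
        exact lt_irrefl _ hu
    · rintro ⟨hu0, hul⟩
      exact lt_second_of_ne (h0 ▸ π.symm.injective.ne hu0) (hm ▸ π.symm.injective.ne hul)

end SecondLargest

/-- For `n + 3` letters, 0-indexed: `⟨n + 1, _⟩` is the second largest value. -/
def admissibleLeftSets (n : ℕ) : Finset (Finset (Fin (n + 3))) :=
  {L ∈ (univ \ {0, Fin.last _}).powerset | ⟨n + 1, by omega⟩ ∈ L → L = univ \ {0, Fin.last _}}

lemma last_notMem_of_mem_admissibleLeftSets {L : Finset (Fin (n + 3))}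
    (hL : L ∈ admissibleLeftSets n) : Fin.last _ ∉ L := fun h => by
  simpa using (mem_powerset.1 (mem_filter.1 hL).1) h

lemma card_admissibleLeftSets (n : ℕ) : #(admissibleLeftSets n) = 2 ^ n + 1 := by
  set B : Finset (Fin (n + 3)) := univ \ {0, Fin.last _}
  have hB : #B = n + 1 := by
    rw [card_univ_sdiff, card_pair Fin.last_pos.ne]
    simp
  have hsB : (⟨n + 1, by omega⟩ : Fin (n + 3)) ∈ B := by
    simp [B, Fin.ext_iff]
  have : admissibleLeftSets n = insert B (B.erase ⟨n + 1, by omega⟩).powerset := by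
    ext L
    simp only [admissibleLeftSets, mem_filter, mem_powerset, mem_insert, subset_erase]
    constructor
    · rintro ⟨hLB, hL⟩
      by_cases hs : (⟨n + 1, by omega⟩ : Fin (n + 3)) ∈ L
      · exact Or.inl (hL hs)
      · exact Or.inr ⟨hLB, hs⟩
    · rintro (rfl | ⟨hLB, hs⟩)
      · exact ⟨subset_rfl, fun _ => rfl⟩
      · exact ⟨hLB, fun h => absurd h hs⟩
  rw [this, card_insert_of_notMem (fun h => notMem_erase _ _ (mem_powerset.1 h hsB)),
    card_powerset, card_erase_of_mem hsB, hB, Nat.add_sub_cancel]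

lemma leftSet_mem_admissibleLeftSets_iff {π : Equiv.Perm (Fin (n + 3))} (hπ : π.IsUnimodal) :
    π.leftSet ∈ admissibleLeftSets n ↔ π (Fin.last _) = 0 ∧ AvoidsConsecPat (π ^ 2) p213 := by
  have hsub : π.leftSet ⊆ univ \ {0, Fin.last _} ↔ π (Fin.last _) = 0 := by
    rw [apply_last_eq_zero_iff hπ]
    simp only [subset_iff, mem_sdiff, mem_univ, true_and, mem_insert, mem_singleton, not_or]
    refine ⟨fun h h0 => (h h0).1 rfl, fun h x hx => ⟨fun hx0 => h (hx0 ▸ hx), fun hxl => ?_⟩⟩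
    simp [leftSet, hxl] at hx
  have hs : (⟨n + 1, by omega⟩ : Fin (n + 3)) ∈ π.leftSet ↔
      π.symm ⟨n + 1, by omega⟩ < π.symm (Fin.last _) := by
    simp [leftSet]
  simp only [admissibleLeftSets, mem_filter, mem_powerset, hsub]
  refine and_congr_right fun hlast => ?_
  rw [hs, leftSet_eq_iff hlast, avoidsConsecPat_sq_p213_iff hπ hlast (apply_symm_apply _ _)
    (apply_symm_apply _ _)]

end Equiv.Perm

end

/-- for n ≥ 3, the number of π ∈ S_n avoiding 213 and 312, with π²
avoiding the consecutive pattern 213 and π(n) = 1, equals 2^{n−3} + 1. -/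
theorem stmt12 (n : ℕ) (hn : 3 ≤ n) :
    Nat.card {π : Equiv.Perm (Fin n) //
        AvoidsPat π p213 ∧ AvoidsPat π p312 ∧ AvoidsConsecPat (π ^ 2) p213 ∧
        π ⟨n - 1, by omega⟩ = ⟨0, by omega⟩} =
      2 ^ (n - 3) + 1 := by
  obtain ⟨n, rfl⟩ : ∃ k, n = k + 3 := ⟨n - 3, by omega⟩
  classical
  rw [Nat.card_eq_fintype_card, Fintype.card_subtype, Nat.add_sub_cancel,
    ← Equiv.Perm.card_admissibleLeftSets, ← Equiv.Perm.card_filter_leftSet_mem _ fun L =>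
      Equiv.Perm.last_notMem_of_mem_admissibleLeftSets]
  congr 1
  ext π
  simp only [mem_filter, mem_univ, true_and]
  rw [← and_assoc, Equiv.Perm.avoidsPat_p213_and_p312_iff]
  exact and_congr_right fun hπ =>
    ((Equiv.Perm.leftSet_mem_admissibleLeftSets_iff hπ).trans and_comm).symm
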